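/- Let n ≥ 10 be an even integer. If G is a graph on n vertices in which every vertex has triangle-degree at least C(n−3, 2), then e(G) ≥ C(n,2) − n/2. -/

import Mathlib

/-- The triangle-degree of `v`: the number of triangles of `G` containing `v`. -/
def triangleDeg {V : Type*} [Fintype V] [DecidableEq V]
    (G : SimpleGraph V) [DecidableRel G.Adj] (v : V) : ℕ :=
  ((G.cliqueFinset 3).filter (fun s => v ∈ s)).card

/-!
A vertex in at least `C(n-3, 2)` triangles has degree at least `n - 3`, so the complement `Gᶜ`
has maximum degree at most `2`. If `Gᶜ` had more than `n/2` edges, some vertex `v` would have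
`Gᶜ`-degree exactly `2`; then `v` has `G`-degree `n - 3` and lies in `C(n-3, 2)` triangles, so its
`G`-neighbourhood is a clique. Every non-edge of `G` then meets one of the two `Gᶜ`-neighbours of
`v`, which bounds `e(Gᶜ)` by `2 + 2 = 4 < n/2`.
-/

open Finset SimpleGraph

theorem Nat.le_of_choose_two_le_choose_two {a b : ℕ} (ha : 2 ≤ a)
    (h : a.choose 2 ≤ b.choose 2) : a ≤ b := by
  by_contra! hba
  have hsucc : b + b.choose 2 ≤ a.choose 2 := by
    simpa [Nat.choose_succ_succ'] using Nat.choose_le_choose 2 (Nat.succ_le_of_lt hba)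
  obtain rfl : b = 0 := by omega
  rw [Nat.choose_zero_succ] at h
  exact (Nat.choose_pos ha).ne' (Nat.le_zero.mp h)

namespace SimpleGraph

variable {V : Type*} [Fintype V] (G : SimpleGraph V) [DecidableRel G.Adj]

theorem two_mul_card_edgeFinset_le_of_degree_le {k : ℕ} (h : ∀ v, G.degree v ≤ k) :
    2 * #G.edgeFinset ≤ k * Fintype.card V := by
  rw [← sum_degrees_eq_twice_card_edges]
  simpa [mul_comm] using Finset.sum_le_sum fun v (_ : v ∈ univ) => h v

variable [DecidableEq V]

theorem card_edgeFinset_add_card_edgeFinset_compl :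
    #G.edgeFinset + #Gᶜ.edgeFinset = (Fintype.card V).choose 2 := by
  rw [← card_edgeFinset_top_eq_card_choose_two, ← card_union_of_disjoint
    (disjoint_edgeFinset.mpr disjoint_compl_right)]
  congr 1
  rw [← coe_inj]
  simp [← edgeSet_sup]

theorem IsVertexCover.card_edgeFinset_le_sum_degree {c : Finset V}
    (hc : G.IsVertexCover c) : #G.edgeFinset ≤ ∑ u ∈ c, G.degree u := by
  calc #G.edgeFinset ≤ #(c.biUnion fun u => G.incidenceFinset u) := by
        refine card_le_card fun e he => ?_
        induction e using Sym2.ind with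
        | h x y =>
          rw [mem_edgeFinset, mem_edgeSet] at he
          rw [mem_biUnion]
          rcases hc he with hx | hy
          · exact ⟨x, hx, G.mem_incidenceFinset _ _ |>.mpr ⟨he, Sym2.mem_mk_left x y⟩⟩
          · exact ⟨y, hy, G.mem_incidenceFinset _ _ |>.mpr ⟨he, Sym2.mem_mk_right x y⟩⟩
    _ ≤ ∑ u ∈ c, #(G.incidenceFinset u) := card_biUnion_le
    _ = ∑ u ∈ c, G.degree u := by simp only [card_incidenceFinset_eq_degree]

theorem triangleDeg_le_card_cliqueFinset_two_subset_neighborFinset (v : V) :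
    triangleDeg G v ≤ #{t ∈ G.cliqueFinset 2 | t ⊆ G.neighborFinset v} := by
  refine card_le_card_of_injOn (fun s => s.erase v) (fun s hs => ?_) fun s₁ h₁ s₂ h₂ h => ?_
  · simp only [coe_filter, mem_cliqueFinset_iff] at hs
    obtain ⟨hs3, hv⟩ := hs
    refine mem_filter.mpr ⟨mem_cliqueFinset_iff.mpr (hs3.erase_of_mem hv), fun x hx => ?_⟩
    exact (G.mem_neighborFinset _ _).mpr <|
      hs3.isClique hv (mem_of_mem_erase hx) (ne_of_mem_erase hx).symm
  · simp only [coe_filter] at h₁ h₂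
    rw [← insert_erase h₁.2, show s₁.erase v = s₂.erase v from h, insert_erase h₂.2]

theorem filter_cliqueFinset_two_subset_neighborFinset_subset (v : V) :
    {t ∈ G.cliqueFinset 2 | t ⊆ G.neighborFinset v} ⊆ (G.neighborFinset v).powersetCard 2 :=
  fun t ht => by
    rw [mem_filter, mem_cliqueFinset_iff] at ht
    exact mem_powersetCard.mpr ⟨ht.2, ht.1.card_eq⟩

theorem triangleDeg_le_choose_degree (v : V) : triangleDeg G v ≤ (G.degree v).choose 2 := by
  rw [← card_neighborFinset_eq_degree, ← card_powersetCard]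
  exact (G.triangleDeg_le_card_cliqueFinset_two_subset_neighborFinset v).trans
    (card_le_card (G.filter_cliqueFinset_two_subset_neighborFinset_subset v))

theorem isClique_neighborFinset_of_choose_degree_le_triangleDeg {v : V}
    (h : (G.degree v).choose 2 ≤ triangleDeg G v) : G.IsClique (G.neighborFinset v : Set V) := by
  have hall : {t ∈ G.cliqueFinset 2 | t ⊆ G.neighborFinset v} =
      (G.neighborFinset v).powersetCard 2 := by
    refine eq_of_subset_of_card_le (G.filter_cliqueFinset_two_subset_neighborFinset_subset v) ?_
    rw [card_powersetCard, card_neighborFinset_eq_degree]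
    exact h.trans (G.triangleDeg_le_card_cliqueFinset_two_subset_neighborFinset v)
  intro x hx y hy hxy
  have hpair : {x, y} ∈ (G.neighborFinset v).powersetCard 2 :=
    mem_powersetCard.mpr ⟨insert_subset hx (singleton_subset_iff.mpr hy), card_pair hxy⟩
  rw [← hall, mem_filter, mem_cliqueFinset_iff, isNClique_iff, coe_pair, isClique_pair] at hpair
  exact hpair.1.1 hxy

theorem isVertexCover_compl_neighborFinset {v : V}
    (hv : G.IsClique (G.neighborFinset v : Set V)) :
    Gᶜ.IsVertexCover (Gᶜ.neighborFinset v : Set V) := by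
  intro x y hxy
  simp only [mem_coe, mem_neighborFinset, compl_adj] at hxy ⊢
  by_contra! hcov
  rcases eq_or_ne v x with rfl | hvx
  · exact hxy.2 (hcov.2 hxy.1)
  rcases eq_or_ne v y with rfl | hvy
  · exact hxy.2 (hcov.1 hxy.1.symm).symm
  exact hxy.2 (hv (by simpa using hcov.1 hvx) (by simpa using hcov.2 hvy) hxy.1)

end SimpleGraph

theorem edges_case_t_eq_n_sub_three_general (n : ℕ) (hn : 10 ≤ n)
    (V : Type) [Fintype V] [DecidableEq V] (hV : Fintype.card V = n)
    (G : SimpleGraph V) [DecidableRel G.Adj]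
    (hdeg : ∀ v : V, Nat.choose (n - 3) 2 ≤ triangleDeg G v) :
    Nat.choose n 2 - n / 2 ≤ G.edgeFinset.card := by
  have hdegG (v : V) : n - 3 ≤ G.degree v :=
    Nat.le_of_choose_two_le_choose_two (by omega)
      ((hdeg v).trans (G.triangleDeg_le_choose_degree v))
  have hdegC (v : V) : Gᶜ.degree v = n - 1 - G.degree v := by rw [degree_compl, hV]
  have hdegC_le (v : V) : Gᶜ.degree v ≤ 2 := by have := hdegG v; rw [hdegC]; omega
  have hsum := G.card_edgeFinset_add_card_edgeFinset_compl
  rw [hV] at hsum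
  suffices #Gᶜ.edgeFinset ≤ n / 2 by omega
  by_contra! hmany
  obtain ⟨v, hv⟩ : ∃ v, Gᶜ.degree v = 2 := by
    by_contra! hno
    have := Gᶜ.two_mul_card_edgeFinset_le_of_degree_le (k := 1) fun v => by
      have := hdegC_le v; have := hno v; omega
    omega
  have hGv : G.degree v = n - 3 := by
    have := hdegC v; have := G.degree_lt_card_verts v; omega
  have hclique :=
    G.isClique_neighborFinset_of_choose_degree_le_triangleDeg (by rw [hGv]; exact hdeg v)
  have hfew : #Gᶜ.edgeFinset ≤ 4 :=
    calc #Gᶜ.edgeFinset ≤ ∑ u ∈ Gᶜ.neighborFinset v, Gᶜ.degree u :=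
          (G.isVertexCover_compl_neighborFinset hclique).card_edgeFinset_le_sum_degree
      _ ≤ ∑ u ∈ Gᶜ.neighborFinset v, 2 := sum_le_sum fun u _ => hdegC_le u
      _ = 4 := by simp [card_neighborFinset_eq_degree, hv]
  omega

/-- The case `t = n - 3`, `n` even: if every vertex of an `n`-vertex graph `G`
(`n ≥ 10` even) lies in at least `C(n-3,2)` triangles, then `e(G) ≥ C(n,2) - n/2`. -/
theorem edges_case_t_eq_n_sub_three (n : ℕ) (hn : 10 ≤ n) (hne : Even n)
    (V : Type) [Fintype V] [DecidableEq V] (hV : Fintype.card V = n)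
    (G : SimpleGraph V) [DecidableRel G.Adj]
    (hdeg : ∀ v : V, Nat.choose (n - 3) 2 ≤ triangleDeg G v) :
    Nat.choose n 2 - n / 2 ≤ G.edgeFinset.card :=
  edges_case_t_eq_n_sub_three_general n hn V hV G hdeg
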